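/- arXiv:math/0610074 — 5 statements merged into one kernel-verified Lean document; each statement's English description precedes it below -/
import Mathlib

section
/- Let (h₁,h₂) ∈ ℍ² satisfy |h₁|² + |h₂|² < 1. Then 1 + h₂ ≠ 0 and the point (q₁,q₂) = (h₁(1+h₂)⁻¹, (1−h₂)(1+h₂)⁻¹) satisfies Re q₂ > |q₁|²; that is, the Cayley transform maps the unit ball of ℍ² into the Siegel upper half space 𝒰₁. -/
/-!
Writing `(1 + h₂)⁻¹ = star (1 + h₂) / |1 + h₂|²` and using
`Re ((1 - h₂) (1 + star h₂)) = 1 - |h₂|²`, one gets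
`Re q₂ - |q₁|² = (1 - |h₁|² - |h₂|²) / |1 + h₂|²`, which is positive on the unit ball.
-/

noncomputable section

/-- The real quaternions. -/
abbrev H := Quaternion ℝ

namespace Quaternion

theorem re_mul_inv {R : Type*} [Field R] [LinearOrder R] [IsStrictOrderedRing R] (a b : ℍ[R]) :
    (a * b⁻¹).re = (a * star b).re / normSq b := by
  rw [inv_def, mul_smul_comm, re_smul, smul_eq_mul, inv_mul_eq_div]

theorem re_one_sub_mul_star_one_add {R : Type*} [CommRing R] (a : ℍ[R]) :
    ((1 - a) * star (1 + a)).re = 1 - normSq a := by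
  rw [star_add, star_one, sub_mul, one_mul, mul_add, mul_one, self_mul_star]
  simp only [re_sub, re_add, re_star, re_one, re_coe]
  ring

theorem cayley_re_sub_norm_sq (h₁ h₂ : ℍ) :
    ((1 - h₂) * (1 + h₂)⁻¹).re - ‖h₁ * (1 + h₂)⁻¹‖ ^ 2 =
      (1 - ‖h₁‖ ^ 2 - ‖h₂‖ ^ 2) / ‖1 + h₂‖ ^ 2 := by
  rw [re_mul_inv, re_one_sub_mul_star_one_add, norm_mul, norm_inv, mul_pow, inv_pow,
    normSq_eq_norm_mul_self, normSq_eq_norm_mul_self, ← sq, ← sq]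
  ring

end Quaternion

/-- If `(h₁, h₂) ∈ ℍ²` satisfies `|h₁|² + |h₂|² < 1`, then `1 + h₂ ≠ 0` and the
point `(q₁, q₂) = (h₁(1+h₂)⁻¹, (1−h₂)(1+h₂)⁻¹)` satisfies `Re q₂ > |q₁|²`; i.e. the Cayley
transform maps the unit ball of `ℍ²` into the Siegel upper half space `𝒰₁`. -/
theorem cayley_maps_ball_into_siegel (h₁ h₂ : H) (hb : ‖h₁‖ ^ 2 + ‖h₂‖ ^ 2 < 1) :
    1 + h₂ ≠ 0 ∧ ((1 - h₂) * (1 + h₂)⁻¹).re > ‖h₁ * (1 + h₂)⁻¹‖ ^ 2 := by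
  have norm_neg_h₂_lt_one : ‖-h₂‖ < 1 := by
    rw [norm_neg]
    nlinarith [sq_nonneg ‖h₁‖, norm_nonneg h₂]
  have hne : 1 + h₂ ≠ 0 := by
    simpa only [sub_neg_eq_add] using (isUnit_one_sub_of_norm_lt_one norm_neg_h₂_lt_one).ne_zero
  refine ⟨hne, sub_pos.mp ?_⟩
  rw [Quaternion.cayley_re_sub_norm_sq]
  exact div_pos (by linarith) (by positivity)

end
end

section
/- The Cayley transform κ(q₁,q₂) = (q₁(1 + (1+q₂)⁻¹(1−q₂)), (1+q₂)⁻¹(1−q₂)) is a bijection from the Siegel upper half space 𝒰₁ = {(q₁,q₂) ∈ ℍ² : Re q₂ > |q₁|²} onto the unit ball B₁ = {(h₁,h₂) ∈ ℍ² : |h₁|² + |h₂|² < 1}, with inverse given by κ⁻¹(h₁,h₂) = (h₁(1+h₂)⁻¹, (1−h₂)(1+h₂)⁻¹). (In particular 1+q₂ ≠ 0 on 𝒰₁ and 1+h₂ ≠ 0 on B₁, so all expressions are defined.) -/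
noncomputable section

/-- The Siegel upper half space `𝒰₁ = {(q₁,q₂) ∈ ℍ² : Re q₂ > |q₁|²}`. -/
def Siegel : Set (H × H) := {q | q.2.re > ‖q.1‖ ^ 2}

/-- The unit ball `B₁ = {(h₁,h₂) ∈ ℍ² : |h₁|² + |h₂|² < 1}`. -/
def UnitBall : Set (H × H) := {h | ‖h.1‖ ^ 2 + ‖h.2‖ ^ 2 < 1}

/-- The Cayley transform `κ(q₁,q₂) = (q₁(1 + (1+q₂)⁻¹(1−q₂)), (1+q₂)⁻¹(1−q₂))`. -/
def cayley (q : H × H) : H × H :=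
  (q.1 * (1 + (1 + q.2)⁻¹ * (1 - q.2)), (1 + q.2)⁻¹ * (1 - q.2))

/-- The inverse Cayley transform `κ⁻¹(h₁,h₂) = (h₁(1+h₂)⁻¹, (1−h₂)(1+h₂)⁻¹)`. -/
def cayleyInv (h : H × H) : H × H :=
  (h.1 * (1 + h.2)⁻¹, (1 - h.2) * (1 + h.2)⁻¹)

/-!
Put `c(x) = (1 + x)⁻¹ (1 - x)`. As `1 - x` and `1 + x` commute, `κ⁻¹(h) = (h₁ (1 + h₂)⁻¹, c(h₂))`,
and `1 + c(x) = (1 + x)⁻¹ 2`, `1 - c(x) = (1 + x)⁻¹ 2x` show that `c` is an involution wherever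
`1 + x ≠ 0`; this makes `κ` and `κ⁻¹` mutually inverse. Moreover
`|κ₁|² + |κ₂|² = (4|q₁|² + |1 - q₂|²) / |1 + q₂|²` and `|1 + q|² - |1 - q|² = 4 Re q`, so
`κ(q) ∈ B₁ ↔ q ∈ 𝒰₁`; applied to `q = κ⁻¹(h)` this also gives `κ⁻¹(B₁) ⊆ 𝒰₁`.
-/

section DivisionRing

variable {D : Type*} [DivisionRing D] {x : D}

def cayley₁ (x : D) : D := (1 + x)⁻¹ * (1 - x)

theorem one_sub_mul_inv_one_add (x : D) : (1 - x) * (1 + x)⁻¹ = cayley₁ x :=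
  ((Commute.one_right (1 + x)).sub_right ((Commute.one_left x).add_left (Commute.refl x))
    |>.inv_left₀).symm.eq

theorem one_add_cayley₁ (hx : 1 + x ≠ 0) : 1 + cayley₁ x = (1 + x)⁻¹ * 2 := by
  rw [eq_inv_mul_iff_mul_eq₀ hx, cayley₁, mul_add, mul_inv_cancel_left₀ hx,
    mul_one, add_add_sub_cancel, one_add_one_eq_two]

theorem one_sub_cayley₁ (hx : 1 + x ≠ 0) : 1 - cayley₁ x = (1 + x)⁻¹ * (2 * x) := by
  rw [eq_inv_mul_iff_mul_eq₀ hx, cayley₁, mul_sub, mul_inv_cancel_left₀ hx]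
  noncomm_ring

variable [NeZero (2 : D)]

theorem one_add_cayley₁_ne_zero (hx : 1 + x ≠ 0) : 1 + cayley₁ x ≠ 0 := by
  rw [one_add_cayley₁ hx]
  exact mul_ne_zero (inv_ne_zero hx) two_ne_zero

theorem cayley₁_cayley₁ (hx : 1 + x ≠ 0) : cayley₁ (cayley₁ x) = x := by
  rw [cayley₁, one_add_cayley₁ hx, one_sub_cayley₁ hx, mul_inv_rev, inv_inv, mul_assoc,
    mul_inv_cancel_left₀ hx, inv_mul_cancel_left₀ two_ne_zero]

end DivisionRing

instance : CharZero H := charZero_of_injective_algebraMap (algebraMap ℝ H).injective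

theorem Quaternion.norm_one_add_sq (x : H) : ‖1 + x‖ ^ 2 = 1 + 2 * x.re + ‖x‖ ^ 2 := by
  rw [norm_add_sq_real, Quaternion.inner_def]
  simp

theorem Quaternion.norm_one_sub_sq (x : H) : ‖1 - x‖ ^ 2 = 1 - 2 * x.re + ‖x‖ ^ 2 := by
  rw [norm_sub_sq_real, Quaternion.inner_def]
  simp

theorem cayley_eq (q : H × H) : cayley q = (q.1 * (1 + cayley₁ q.2), cayley₁ q.2) := rfl

theorem cayleyInv_eq (h : H × H) : cayleyInv h = (h.1 * (1 + h.2)⁻¹, cayley₁ h.2) := by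
  rw [cayleyInv, one_sub_mul_inv_one_add]

theorem one_add_ne_zero_of_mem_siegel {q : H × H} (hq : q ∈ Siegel) : 1 + q.2 ≠ 0 := by
  intro h
  have hq' : q.2.re > ‖q.1‖ ^ 2 := hq
  have hre : (1 + q.2).re = 0 := by rw [h, Quaternion.re_zero]
  rw [Quaternion.re_add, Quaternion.re_one] at hre
  linarith [sq_nonneg ‖q.1‖]

theorem one_add_ne_zero_of_mem_unitBall {h : H × H} (hh : h ∈ UnitBall) : 1 + h.2 ≠ 0 := by
  intro he
  have hh' : ‖h.1‖ ^ 2 + ‖h.2‖ ^ 2 < 1 := hh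
  rw [eq_neg_of_add_eq_zero_right he, norm_neg, norm_one] at hh'
  nlinarith [sq_nonneg ‖h.1‖]

theorem cayleyInv_cayley {q : H × H} (hq : 1 + q.2 ≠ 0) : cayleyInv (cayley q) = q := by
  simp only [cayleyInv_eq, cayley_eq]
  rw [cayley₁_cayley₁ hq, mul_inv_cancel_right₀ (one_add_cayley₁_ne_zero hq)]

theorem cayley_cayleyInv {h : H × H} (hh : 1 + h.2 ≠ 0) : cayley (cayleyInv h) = h := by
  simp only [cayleyInv_eq, cayley_eq]
  rw [cayley₁_cayley₁ hh, inv_mul_cancel_right₀ hh]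

theorem cayley_mem_unitBall_iff {q : H × H} (hq : 1 + q.2 ≠ 0) :
    cayley q ∈ UnitBall ↔ q ∈ Siegel := by
  have hpos : 0 < ‖1 + q.2‖ ^ 2 := by positivity
  have hnorm : ‖(cayley q).1‖ ^ 2 + ‖(cayley q).2‖ ^ 2
      = (4 * ‖q.1‖ ^ 2 + ‖1 - q.2‖ ^ 2) / ‖1 + q.2‖ ^ 2 := by
    rw [cayley_eq, one_add_cayley₁ hq, cayley₁]
    have h2 : ‖(2 : H)‖ = 2 := by
      rw [← map_ofNat (algebraMap ℝ H) 2, norm_algebraMap', Real.norm_two]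
    simp only [norm_mul, norm_inv, h2]
    field_simp
    ring
  show ‖(cayley q).1‖ ^ 2 + ‖(cayley q).2‖ ^ 2 < 1 ↔ q.2.re > ‖q.1‖ ^ 2
  rw [hnorm, div_lt_one hpos, Quaternion.norm_one_add_sq, Quaternion.norm_one_sub_sq]
  constructor <;> intro h <;> linarith

theorem mapsTo_cayley : Set.MapsTo cayley Siegel UnitBall := fun _ hq =>
  (cayley_mem_unitBall_iff (one_add_ne_zero_of_mem_siegel hq)).2 hq

theorem mapsTo_cayleyInv : Set.MapsTo cayleyInv UnitBall Siegel := by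
  intro h hh
  have hh' := one_add_ne_zero_of_mem_unitBall hh
  have hne : 1 + (cayleyInv h).2 ≠ 0 := by
    rw [cayleyInv_eq]
    exact one_add_cayley₁_ne_zero hh'
  rw [← cayley_mem_unitBall_iff hne, cayley_cayleyInv hh']
  exact hh

/-- The Cayley transform is a bijection from the Siegel upper half space `𝒰₁`
onto the unit ball `B₁`, with inverse `κ⁻¹`; in particular `1 + q₂ ≠ 0` on `𝒰₁` and
`1 + h₂ ≠ 0` on `B₁`, so all the expressions involved are defined. -/
theorem cayley_bijection :
    (∀ q ∈ Siegel, 1 + q.2 ≠ 0) ∧ (∀ h ∈ UnitBall, 1 + h.2 ≠ 0) ∧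
      Set.BijOn cayley Siegel UnitBall ∧
      Set.InvOn cayleyInv cayley Siegel UnitBall := by
  have hinv : Set.InvOn cayleyInv cayley Siegel UnitBall :=
    ⟨fun _ hq => cayleyInv_cayley (one_add_ne_zero_of_mem_siegel hq),
      fun _ hh => cayley_cayleyInv (one_add_ne_zero_of_mem_unitBall hh)⟩
  exact ⟨fun _ => one_add_ne_zero_of_mem_siegel, fun _ => one_add_ne_zero_of_mem_unitBall,
    hinv.bijOn mapsTo_cayley mapsTo_cayleyInv, hinv⟩

end
end

section
/- Let ι : ℍ×ℝ³ → ℍ² be the embedding ι(w,t) = (w, |w|² + 𝐢·t), parametrizing ∂𝒰₁. Let F : ℍ² → ℍ be continuously differentiable and set G = F ∘ ι. Then at every point (w,t), with w = x₀+i₁x₁+i₂x₂+i₃x₃, one has ½(∂G/∂x₀ + i₁∂G/∂x₁ + i₂∂G/∂x₂ + i₃∂G/∂x₃) + w i₁ ∂G/∂t₁ + w i₂ ∂G/∂t₂ + w i₃ ∂G/∂t₃ = (∂̄_{q₁}F)(ι(w,t)) + 2w·(∂̄_{q₂}F)(ι(w,t)). In particular, if F is q-holomorphic (∂̄_{q₁}F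 = ∂̄_{q₂}F = 0), then the operator H̄ = ∂̄_w + Σₘ w iₘ ∂_{tₘ} annihilates G, i.e. H̄ is a tangential Cauchy–Riemann–Fueter operator on ∂𝒰₁. -/
noncomputable section

/-- The imaginary unit `i₁`. -/
def e1 : H := ⟨0, 1, 0, 0⟩
/-- The imaginary unit `i₂`. -/
def e2 : H := ⟨0, 0, 1, 0⟩
/-- The imaginary unit `i₃`. -/
def e3 : H := ⟨0, 0, 0, 1⟩

/-- `𝐢·t = i₁t₁ + i₂t₂ + i₃t₃` for `t ∈ ℝ³`. -/
def idot (t : ℝ × ℝ × ℝ) : H := t.1 • e1 + t.2.1 • e2 + t.2.2 • e3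

/-- The embedding `ι : ℍ×ℝ³ → ℍ²`, `ι(w,t) = (w, |w|² + 𝐢·t)`, parametrizing `∂𝒰₁`. -/
def iota (g : H × ℝ × ℝ × ℝ) : H × H :=
  (g.1, ((‖g.1‖ ^ 2 : ℝ) : H) + idot g.2)

/-- `∂̄_{q₁} F` at `P ∈ ℍ²`: `½(∂F/∂x₀ + i₁∂F/∂x₁ + i₂∂F/∂x₂ + i₃∂F/∂x₃)` in the first
quaternion variable, with the imaginary units acting by left multiplication. -/
def dbarQ1 (F : H × H → H) (P : H × H) : H :=
  (1 / 2 : ℝ) •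
    (fderiv ℝ F P ((1 : H), (0 : H)) + e1 * fderiv ℝ F P (e1, (0 : H)) +
      e2 * fderiv ℝ F P (e2, (0 : H)) + e3 * fderiv ℝ F P (e3, (0 : H)))

/-- `∂̄_{q₂} F` at `P ∈ ℍ²`, analogously in the second quaternion variable. -/
def dbarQ2 (F : H × H → H) (P : H × H) : H :=
  (1 / 2 : ℝ) •
    (fderiv ℝ F P ((0 : H), (1 : H)) + e1 * fderiv ℝ F P ((0 : H), e1) +
      e2 * fderiv ℝ F P ((0 : H), e2) + e3 * fderiv ℝ F P ((0 : H), e3))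

/-- The tangential operator `H̄ = ∂̄_w + Σₘ w iₘ ∂_{tₘ}` applied to `G : ℍ×ℝ³ → ℍ`
at the point `p = (w,t)`. -/
def Hbar (G : H × ℝ × ℝ × ℝ → H) (p : H × ℝ × ℝ × ℝ) : H :=
  (1 / 2 : ℝ) •
      (fderiv ℝ G p ((1 : H), (0 : ℝ), (0 : ℝ), (0 : ℝ)) +
        e1 * fderiv ℝ G p (e1, (0 : ℝ), (0 : ℝ), (0 : ℝ)) +
        e2 * fderiv ℝ G p (e2, (0 : ℝ), (0 : ℝ), (0 : ℝ)) +
        e3 * fderiv ℝ G p (e3, (0 : ℝ), (0 : ℝ), (0 : ℝ))) +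
    p.1 * e1 * fderiv ℝ G p ((0 : H), (1 : ℝ), (0 : ℝ), (0 : ℝ)) +
    p.1 * e2 * fderiv ℝ G p ((0 : H), (0 : ℝ), (1 : ℝ), (0 : ℝ)) +
    p.1 * e3 * fderiv ℝ G p ((0 : H), (0 : ℝ), (0 : ℝ), (1 : ℝ))

/-! By the chain rule, `dι_{(w,t)}(h, s) = (h, 2⟪w, h⟫ + 𝐢·s)`. Hence the `∂̄_w` part of `H̄G`
is `∂̄_{q₁}F` plus `(Σₘ ⟪w, uₘ⟫ uₘ) ∂F/∂x₀ = w ∂F/∂x₀` in the second variable (`uₘ` running over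
`1, i₁, i₂, i₃`), while the `t`-derivatives contribute `w Σₘ iₘ ∂F/∂xₘ` in the second variable;
together these make `2w ∂̄_{q₂}F`. -/

open scoped RealInnerProductSpace
open ContinuousLinearMap

def idotCLM : (ℝ × ℝ × ℝ) →L[ℝ] H :=
  (fst ℝ ℝ (ℝ × ℝ)).smulRight e1 + ((fst ℝ ℝ ℝ).comp (snd ℝ ℝ (ℝ × ℝ))).smulRight e2 +
    ((snd ℝ ℝ ℝ).comp (snd ℝ ℝ (ℝ × ℝ))).smulRight e3

theorem idotCLM_apply (t : ℝ × ℝ × ℝ) : idotCLM t = idot t := rfl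

def fderivIota (w : H) : (H × ℝ × ℝ × ℝ) →L[ℝ] H × H :=
  (fst ℝ H (ℝ × ℝ × ℝ)).prod
    ((2 • (innerSL ℝ w).comp (fst ℝ H (ℝ × ℝ × ℝ))).smulRight (1 : H) +
      idotCLM.comp (snd ℝ H (ℝ × ℝ × ℝ)))

theorem fderivIota_apply (w h : H) (s : ℝ × ℝ × ℝ) :
    fderivIota w (h, s) = (h, (2 * ⟪w, h⟫) • (1 : H) + idot s) := by
  simp [fderivIota, idotCLM_apply]

theorem hasFDerivAt_iota (p : H × ℝ × ℝ × ℝ) : HasFDerivAt iota (fderivIota p.1) p := by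
  have hiota : iota = fun g => (g.1, (‖g.1‖ ^ 2) • (1 : H) + idotCLM g.2) := by
    funext g
    simp only [iota, idotCLM_apply, ← Algebra.algebraMap_eq_smul_one, Quaternion.algebraMap_def]
  rw [hiota]
  exact hasFDerivAt_fst.prodMk
    ((hasFDerivAt_fst.norm_sq.smul_const 1).add (idotCLM.hasFDerivAt.comp p hasFDerivAt_snd))

theorem fderiv_comp_iota_apply {F : H × H → H} {p : H × ℝ × ℝ × ℝ}
    (hF : DifferentiableAt ℝ F (iota p)) (h : H) (s : ℝ × ℝ × ℝ) :
    fderiv ℝ (F ∘ iota) p (h, s) =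
      fderiv ℝ F (iota p) (h, 0) + (2 * ⟪p.1, h⟫) • fderiv ℝ F (iota p) (0, 1) +
        fderiv ℝ F (iota p) (0, idot s) := by
  have hsplit : (h, (2 * ⟪p.1, h⟫) • (1 : H) + idot s) =
      (h, 0) + (2 * ⟪p.1, h⟫) • ((0 : H), (1 : H)) + (0, idot s) := by
    simp
  rw [(hF.hasFDerivAt.comp p (hasFDerivAt_iota p)).fderiv, comp_apply, fderivIota_apply, hsplit,
    map_add, map_add, map_smul]

theorem inner_eq_re_mul_add (w v : H) :
    ⟪w, v⟫ = w.re * v.re + w.imI * v.imI + w.imJ * v.imJ + w.imK * v.imK := by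
  simp only [Quaternion.inner_def, Quaternion.re_mul, Quaternion.re_star, Quaternion.imI_star,
    Quaternion.imJ_star, Quaternion.imK_star]
  ring

theorem inner_one_right (w : H) : ⟪w, 1⟫ = w.re := by simp [Quaternion.inner_def]
theorem inner_e1_right (w : H) : ⟪w, e1⟫ = w.imI := by rw [inner_eq_re_mul_add]; simp [e1]
theorem inner_e2_right (w : H) : ⟪w, e2⟫ = w.imJ := by rw [inner_eq_re_mul_add]; simp [e2]
theorem inner_e3_right (w : H) : ⟪w, e3⟫ = w.imK := by rw [inner_eq_re_mul_add]; simp [e3]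

theorem re_smul_one_add_imI_smul_add_imJ_smul_add_imK_smul (w : H) :
    w.re • (1 : H) + w.imI • e1 + w.imJ • e2 + w.imK • e3 = w := by
  ext <;>
    simp only [Quaternion.re_add, Quaternion.imI_add, Quaternion.imJ_add, Quaternion.imK_add,
      Quaternion.re_smul, Quaternion.imI_smul, Quaternion.imJ_smul, Quaternion.imK_smul,
      Quaternion.re_one, Quaternion.imI_one, Quaternion.imJ_one, Quaternion.imK_one,
      smul_eq_mul] <;>
    simp [e1, e2, e3]

theorem re_smul_add_e_mul_im_smul (w C : H) :
    w.re • C + e1 * (w.imI • C) + e2 * (w.imJ • C) + e3 * (w.imK • C) = w * C := by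
  conv_rhs => rw [← re_smul_one_add_imI_smul_add_imJ_smul_add_imK_smul w]
  simp only [add_mul, smul_mul_assoc, one_mul, mul_smul_comm]

theorem Hbar_comp_iota_identity (w A B₁ B₂ B₃ C D₁ D₂ D₃ : H) :
    (1 / 2 : ℝ) • ((A + (2 * w.re) • C) + e1 * (B₁ + (2 * w.imI) • C) +
        e2 * (B₂ + (2 * w.imJ) • C) + e3 * (B₃ + (2 * w.imK) • C)) +
      w * e1 * D₁ + w * e2 * D₂ + w * e3 * D₃ =
    (1 / 2 : ℝ) • (A + e1 * B₁ + e2 * B₂ + e3 * B₃) +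
      2 * w * ((1 / 2 : ℝ) • (C + e1 * D₁ + e2 * D₂ + e3 * D₃)) := by
  have hrhs : 2 * w * ((1 / 2 : ℝ) • (C + e1 * D₁ + e2 * D₂ + e3 * D₃)) =
      w * C + w * e1 * D₁ + w * e2 * D₂ + w * e3 * D₃ := by
    simp only [mul_smul_comm, two_mul, add_mul, mul_add, mul_assoc]
    module
  rw [hrhs, ← re_smul_add_e_mul_im_smul w C]
  simp only [mul_add, mul_smul_comm]
  module

theorem Hbar_comp_iota {F : H × H → H} {p : H × ℝ × ℝ × ℝ}
    (hF : DifferentiableAt ℝ F (iota p)) :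
    Hbar (F ∘ iota) p = dbarQ1 F (iota p) + 2 * p.1 * dbarQ2 F (iota p) := by
  simp only [Hbar, dbarQ1, dbarQ2, fderiv_comp_iota_apply hF, idot, inner_zero_right,
    inner_one_right, inner_e1_right, inner_e2_right, inner_e3_right, mul_zero, zero_smul,
    one_smul, add_zero, zero_add, Prod.mk_zero_zero, Prod.fst_zero, Prod.snd_zero, map_zero]
  exact Hbar_comp_iota_identity ..

/-- For `F : ℍ² → ℍ` continuously differentiable and `G = F ∘ ι`, at every
point `(w,t)` one has `H̄G = (∂̄_{q₁}F)(ι(w,t)) + 2w·(∂̄_{q₂}F)(ι(w,t))`. In particular, if `F`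
is q-holomorphic then `H̄` annihilates `G`, i.e. `H̄` is a tangential Cauchy–Riemann–Fueter
operator on `∂𝒰₁`. -/
theorem Hbar_tangential (F : H × H → H) (hF : ContDiff ℝ 1 F) :
    (∀ p : H × ℝ × ℝ × ℝ,
      Hbar (F ∘ iota) p = dbarQ1 F (iota p) + 2 * p.1 * dbarQ2 F (iota p)) ∧
      ((∀ P : H × H, dbarQ1 F P = 0) → (∀ P : H × H, dbarQ2 F P = 0) →
        ∀ p : H × ℝ × ℝ × ℝ, Hbar (F ∘ iota) p = 0) := by
  have hformula (p : H × ℝ × ℝ × ℝ) :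
      Hbar (F ∘ iota) p = dbarQ1 F (iota p) + 2 * p.1 * dbarQ2 F (iota p) :=
    Hbar_comp_iota (hF.differentiable one_ne_zero (iota p))
  refine ⟨hformula, fun h₁ h₂ p => ?_⟩
  rw [hformula, h₁, h₂, mul_zero, add_zero]

end
end

section
/- The following integral evaluation holds: ∫_{ℝ⁴} ∫_{ℝ³} (|t|² + (|w|²+1)²)⁻⁵ dt dw = π⁴/384, where |·| denotes Euclidean norm. Equivalently, the constant k determined by k⁻¹ = 4⁵ · ∫_{ℝ⁴}∫_{ℝ³} (|t|² + (|w|²+1)²)⁻⁵ dt dw equals 3/(8π⁴). -/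
/-!
Scaling `t ↦ (|w|² + 1) t` turns the inner integral into `(|w|² + 1)⁻⁷ ∫_{ℝ³} (|t|² + 1)⁻⁵`, so the
double integral is a product of two integrals `∫_{ℝⁿ} (|x|² + 1)⁻ᵏ`. Polar coordinates reduce
these to `∫₀^∞ r² (r² + 1)⁻⁵ dr = 5π/256` and `∫₀^∞ r³ (r² + 1)⁻⁷ dr = 1/60`, both evaluated by
explicit antiderivatives; with the unit-ball volumes `4π/3` and `π²/2` this gives
`5π²/64 · π²/30 = π⁴/384`.
-/

open MeasureTheory Real

noncomputable section

/-- The normalization integral for the Cauchy–Szegő kernel: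
`∫_{ℝ⁴}∫_{ℝ³} (|t|² + (|w|²+1)²)⁻⁵ dt dw`. -/
def szegoNormIntegral : ℝ :=
  ∫ w : EuclideanSpace ℝ (Fin 4),
    ∫ t : EuclideanSpace ℝ (Fin 3), ((‖t‖ ^ 2 + (‖w‖ ^ 2 + 1) ^ 2) ^ 5)⁻¹

open Filter Topology Set Module Polynomial

theorem integral_inv_norm_sq_add_sq_pow {E : Type*} [NormedAddCommGroup E] [NormedSpace ℝ E]
    [FiniteDimensional ℝ E] [MeasurableSpace E] [BorelSpace E] (μ : Measure E)
    [μ.IsAddHaarMeasure] (k : ℕ) {a : ℝ} (ha : 0 < a) :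
    ∫ x, ((‖x‖ ^ 2 + a ^ 2) ^ k)⁻¹ ∂μ =
      a ^ finrank ℝ E / a ^ (2 * k) * ∫ x, ((‖x‖ ^ 2 + 1) ^ k)⁻¹ ∂μ := by
  have hscale := μ.integral_comp_smul (fun x => ((‖x‖ ^ 2 + a ^ 2) ^ k)⁻¹) a
  have hpoint (x : E) :
      ((‖a • x‖ ^ 2 + a ^ 2) ^ k)⁻¹ = (a ^ (2 * k))⁻¹ * ((‖x‖ ^ 2 + 1) ^ k)⁻¹ := by
    rw [norm_smul, norm_of_nonneg ha.le, ← mul_inv, pow_mul, ← mul_pow]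
    ring
  simp only [hpoint, integral_const_mul, smul_eq_mul, abs_inv, abs_pow, abs_of_pos ha] at hscale
  rw [← mul_inv_cancel_left₀ (pow_ne_zero (finrank ℝ E) ha.ne') (∫ x, _ ∂μ), ← hscale]
  ring

theorem tendsto_inv_sq_add_one_pow_atTop_zero {k : ℕ} (hk : k ≠ 0) :
    Tendsto (fun x : ℝ => ((x ^ 2 + 1) ^ k)⁻¹) atTop (𝓝 0) :=
  tendsto_inv_atTop_zero.comp <| (tendsto_pow_atTop hk).comp <|
    tendsto_atTop_add_const_right _ 1 (tendsto_pow_atTop two_ne_zero)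

theorem integral_Ioi_sq_mul_inv_sq_add_one_pow_five :
    ∫ r in Ioi (0 : ℝ), r ^ 2 * ((r ^ 2 + 1) ^ 5)⁻¹ = 5 * π / 256 := by
  -- The antiderivative is `I₄ - I₅`, with `Iₙ` the primitive of `(x² + 1)⁻ⁿ` from the reduction
  -- formula `Iₙ₊₁ = x / (2n (x² + 1)ⁿ) + (2n - 1)/(2n) · Iₙ`.
  set F : ℝ → ℝ := fun x =>
    5 / 128 * arctan x + (15 * x ^ 7 + 55 * x ^ 5 + 73 * x ^ 3 - 15 * x) / (384 * (x ^ 2 + 1) ^ 4)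
  have hderiv (x : ℝ) : HasDerivAt F (x ^ 2 * ((x ^ 2 + 1) ^ 5)⁻¹) x := by
    have hnum : HasDerivAt (fun x : ℝ => 15 * x ^ 7 + 55 * x ^ 5 + 73 * x ^ 3 - 15 * x)
        (105 * x ^ 6 + 275 * x ^ 4 + 219 * x ^ 2 - 15) x := by
      refine (((((hasDerivAt_pow 7 x).const_mul 15).add ((hasDerivAt_pow 5 x).const_mul 55)).add
        ((hasDerivAt_pow 3 x).const_mul 73)).sub ((hasDerivAt_id x).const_mul 15)).congr_deriv ?_
      push_cast
      ring
    have hden : HasDerivAt (fun x : ℝ => 384 * (x ^ 2 + 1) ^ 4)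
        (384 * (4 * (x ^ 2 + 1) ^ 3 * (2 * x))) x := by
      simpa using (((hasDerivAt_pow 2 x).add_const 1).pow 4).const_mul 384
    have hu0 : x ^ 2 + 1 ≠ 0 := by positivity
    refine (((hasDerivAt_arctan x).const_mul _).add (hnum.div hden (by positivity))).congr_deriv ?_
    field_simp
    ring
  have hlim : Tendsto F atTop (𝓝 (5 * π / 256)) := by
    have hrat := div_tendsto_atTop_zero_of_degree_lt (𝕜 := ℝ)
      (15 * X ^ 7 + 55 * X ^ 5 + 73 * X ^ 3 - 15 * X) (384 * (X ^ 2 + 1) ^ 4) <| by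
        apply degree_lt_degree
        have hnum : (15 * X ^ 7 + 55 * X ^ 5 + 73 * X ^ 3 - 15 * X : ℝ[X]).natDegree ≤ 7 := by
          compute_degree
        have hden : (384 * (X ^ 2 + 1) ^ 4 : ℝ[X]).natDegree = 8 := by compute_degree!
        omega
    have harctan := (tendsto_nhds_of_tendsto_nhdsWithin tendsto_arctan_atTop).const_mul (5 / 128)
    convert harctan.add (by simpa using hrat) using 2
    ring
  rw [integral_Ioi_of_hasDerivAt_of_nonneg' (fun x _ => hderiv x) (fun x _ => by positivity) hlim]
  simp [F]

theorem integral_Ioi_pow_three_mul_inv_sq_add_one_pow (m : ℕ) :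
    ∫ r in Ioi (0 : ℝ), r ^ 3 * ((r ^ 2 + 1) ^ (m + 3))⁻¹ = 1 / (2 * ((m : ℝ) + 1) * (m + 2)) := by
  set F : ℝ → ℝ := fun x =>
    1 / (2 * (m + 2)) * ((x ^ 2 + 1) ^ (m + 2))⁻¹ - 1 / (2 * (m + 1)) * ((x ^ 2 + 1) ^ (m + 1))⁻¹
  have hderiv (x : ℝ) : HasDerivAt F (x ^ 3 * ((x ^ 2 + 1) ^ (m + 3))⁻¹) x := by
    have hu : HasDerivAt (fun x : ℝ => x ^ 2 + 1) (2 * x) x := by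
      simpa using (hasDerivAt_pow 2 x).add_const 1
    have hu0 : x ^ 2 + 1 ≠ 0 := by positivity
    refine ((((hu.pow (m + 2)).inv (pow_ne_zero _ hu0)).const_mul _).sub
      (((hu.pow (m + 1)).inv (pow_ne_zero _ hu0)).const_mul _)).congr_deriv ?_
    simp only [Pi.pow_apply]
    push_cast
    field_simp
    ring
  have hlim : Tendsto F atTop (𝓝 0) := by
    simpa using ((tendsto_inv_sq_add_one_pow_atTop_zero (m + 1).succ_ne_zero).const_mul _).sub
      ((tendsto_inv_sq_add_one_pow_atTop_zero m.succ_ne_zero).const_mul _)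
  have hnonneg (x : ℝ) (hx : x ∈ Ioi 0) : 0 ≤ x ^ 3 * ((x ^ 2 + 1) ^ (m + 3))⁻¹ := by
    have : 0 < x := hx
    positivity
  rw [integral_Ioi_of_hasDerivAt_of_nonneg' (fun x _ => hderiv x) hnonneg hlim]
  simp only [F]
  field_simp
  ring

theorem integral_inv_norm_sq_add_one_pow_five_fin_three :
    ∫ t : EuclideanSpace ℝ (Fin 3), ((‖t‖ ^ 2 + 1) ^ 5)⁻¹ = 5 * π ^ 2 / 64 := by
  rw [integral_fun_norm_addHaar volume fun r => ((r ^ 2 + 1) ^ 5)⁻¹, finrank_euclideanSpace_fin,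
    measureReal_def, EuclideanSpace.volume_ball_fin_three]
  simp only [smul_eq_mul, Nat.add_one_sub_one, integral_Ioi_sq_mul_inv_sq_add_one_pow_five]
  rw [ENNReal.toReal_mul, ENNReal.toReal_ofReal (by positivity)]
  norm_num
  ring

theorem integral_inv_norm_sq_add_one_pow_seven_fin_four :
    ∫ w : EuclideanSpace ℝ (Fin 4), ((‖w‖ ^ 2 + 1) ^ 7)⁻¹ = π ^ 2 / 30 := by
  rw [integral_fun_norm_addHaar volume fun r => ((r ^ 2 + 1) ^ 7)⁻¹, finrank_euclideanSpace_fin,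
    measureReal_def, InnerProductSpace.volume_ball_of_dim_even (k := 2) (by simp)]
  simp only [smul_eq_mul, Nat.add_one_sub_one, integral_Ioi_pow_three_mul_inv_sq_add_one_pow 4]
  rw [ENNReal.toReal_mul, ENNReal.toReal_ofReal (by positivity)]
  norm_num
  ring

theorem szegoNormIntegral_eq : szegoNormIntegral = π ^ 4 / 384 := by
  have hinner (w : EuclideanSpace ℝ (Fin 4)) :
      ∫ t : EuclideanSpace ℝ (Fin 3), ((‖t‖ ^ 2 + (‖w‖ ^ 2 + 1) ^ 2) ^ 5)⁻¹ =
        5 * π ^ 2 / 64 * ((‖w‖ ^ 2 + 1) ^ 7)⁻¹ := by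
    rw [integral_inv_norm_sq_add_sq_pow volume 5 (by positivity), finrank_euclideanSpace_fin,
      integral_inv_norm_sq_add_one_pow_five_fin_three]
    field_simp
  simp only [szegoNormIntegral, hinner, integral_const_mul,
    integral_inv_norm_sq_add_one_pow_seven_fin_four]
  ring

/-- `∫_{ℝ⁴}∫_{ℝ³} (|t|² + (|w|²+1)²)⁻⁵ dt dw = π⁴/384`; equivalently the
constant `k` determined by `k⁻¹ = 4⁵ · ∫∫ (|t|² + (|w|²+1)²)⁻⁵` equals `3/(8π⁴)`. -/
theorem szego_constant_integral :
    szegoNormIntegral = π ^ 4 / 384 ∧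
      ∀ k : ℝ, k⁻¹ = 4 ^ 5 * szegoNormIntegral → k = 3 / (8 * π ^ 4) := by
  refine ⟨szegoNormIntegral_eq, fun k hk => ?_⟩
  rw [← inv_inv k, hk, szegoNormIntegral_eq]
  field_simp
  ring

end
end

section
/- For every complex number λ with |Re λ| < 2, the integral ∫_{−∞}^{∞} e^{−λu} / cosh²(u) du converges and equals 2·Γ((2+λ)/2)·Γ((2−λ)/2), where Γ is the Gamma function. -/
open MeasureTheory Real Complex

noncomputable section

/-! The substitution `x = σ(t) = 1 / (1 + e^{-t})`, with `dx = σ(1 - σ) dt`, maps `ℝ` onto `(0, 1)`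
and turns the Beta integral `B(a, b) = ∫₀¹ x^{a-1} (1-x)^{b-1} dx` into
`∫ e^{a t} / (1 + e^t)^{a+b} dt`. Since `1 / cosh² u = 4 e^{2u} / (1 + e^{2u})²`, the integral in
question is, after `t = 2u`, twice such an integral with `a + b = 2`, and
`Γ(a) Γ(b) = Γ(a + b) B(a, b) = B(a, b)`. -/

open Set

lemma Complex.ofReal_cpow_eq_exp_log {x : ℝ} (hx : 0 < x) (s : ℂ) :
    (x : ℂ) ^ s = cexp (Real.log x * s) := by
  rw [cpow_def_of_ne_zero (ofReal_ne_zero.2 hx.ne'), ofReal_log hx.le]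

namespace Real

variable {E : Type*} [NormedAddCommGroup E] [NormedSpace ℝ E]

lemma abs_sigmoid_mul_one_sub_sigmoid (t : ℝ) :
    |sigmoid t * (1 - sigmoid t)| = sigmoid t * (1 - sigmoid t) :=
  abs_of_pos (mul_pos (sigmoid_pos t) (sub_pos.2 (sigmoid_lt_one t)))

lemma integrableOn_Ioo_zero_one_iff_integrable_comp_sigmoid (g : ℝ → E) :
    IntegrableOn g (Ioo 0 1) ↔
      Integrable (fun t => (sigmoid t * (1 - sigmoid t)) • g (sigmoid t)) := by
  rw [← range_sigmoid, ← image_univ,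
    integrableOn_image_iff_integrableOn_abs_deriv_smul MeasurableSet.univ
      (fun t _ => (hasDerivAt_sigmoid t).hasDerivWithinAt) sigmoid_injective.injOn,
    integrableOn_univ]
  simp only [abs_sigmoid_mul_one_sub_sigmoid]

lemma setIntegral_Ioo_zero_one_eq_integral_comp_sigmoid (g : ℝ → E) :
    ∫ x in Ioo 0 1, g x = ∫ t, (sigmoid t * (1 - sigmoid t)) • g (sigmoid t) := by
  rw [← range_sigmoid, ← image_univ,
    integral_image_eq_integral_abs_deriv_smul MeasurableSet.univ
      (fun t _ => (hasDerivAt_sigmoid t).hasDerivWithinAt) sigmoid_injective.injOn,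
    Measure.restrict_univ]
  simp only [abs_sigmoid_mul_one_sub_sigmoid]

lemma sigmoid_cpow_mul_one_sub_sigmoid_cpow (a b : ℂ) (t : ℝ) :
    (sigmoid t : ℂ) ^ a * (1 - (sigmoid t : ℂ)) ^ b =
      cexp (a * t) / (1 + (Real.exp t : ℂ)) ^ (a + b) := by
  have hL : 0 < 1 + Real.exp t := by positivity
  have hσ : sigmoid t = Real.exp t / (1 + Real.exp t) := by
    rw [sigmoid_def, Real.exp_neg]; field_simp; ring
  have h1σ : 1 - (sigmoid t : ℂ) = ((1 + Real.exp t)⁻¹ : ℝ) := by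
    rw [← ofReal_one, ← ofReal_sub, ← sigmoid_neg, sigmoid_def, neg_neg]
  have hlogσ : Real.log (sigmoid t) = t - Real.log (1 + Real.exp t) := by
    rw [hσ, Real.log_div (Real.exp_pos t).ne' hL.ne', Real.log_exp]
  rw [h1σ, ofReal_cpow_eq_exp_log (sigmoid_pos t), ofReal_cpow_eq_exp_log (inv_pos.2 hL),
    ← ofReal_one, ← ofReal_add, ofReal_cpow_eq_exp_log hL, Real.log_inv, hlogσ,
    ← Complex.exp_add, ← Complex.exp_sub]
  push_cast
  congr 1
  ring

lemma sigmoid_smul_betaIntegrand (a b : ℂ) (t : ℝ) :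
    (sigmoid t * (1 - sigmoid t)) •
        ((sigmoid t : ℂ) ^ (a - 1) * (1 - (sigmoid t : ℂ)) ^ (b - 1)) =
      (sigmoid t : ℂ) ^ a * (1 - (sigmoid t : ℂ)) ^ b := by
  have hσ : (sigmoid t : ℂ) ≠ 0 := ofReal_ne_zero.2 (sigmoid_pos t).ne'
  have h1σ : 1 - (sigmoid t : ℂ) ≠ 0 := by
    rw [← ofReal_one, ← ofReal_sub]; exact ofReal_ne_zero.2 (sub_pos.2 (sigmoid_lt_one t)).ne'
  rw [real_smul, cpow_sub _ _ hσ, cpow_sub _ _ h1σ, cpow_one, cpow_one]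
  push_cast
  field_simp

end Real

theorem Complex.integrable_and_integral_exp_mul_div_one_add_exp_cpow {a b : ℂ}
    (ha : 0 < a.re) (hb : 0 < b.re) :
    Integrable (fun t : ℝ => cexp (a * t) / (1 + (Real.exp t : ℂ)) ^ (a + b)) ∧
      ∫ t : ℝ, cexp (a * t) / (1 + (Real.exp t : ℂ)) ^ (a + b) = betaIntegral a b := by
  set g : ℝ → ℂ := fun x => (x : ℂ) ^ (a - 1) * (1 - (x : ℂ)) ^ (b - 1)
  have hpull : (fun t : ℝ => (sigmoid t * (1 - sigmoid t)) • g (sigmoid t)) =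
        fun t : ℝ => cexp (a * t) / (1 + (Real.exp t : ℂ)) ^ (a + b) := by
    ext t
    rw [sigmoid_smul_betaIntegrand, sigmoid_cpow_mul_one_sub_sigmoid_cpow]
  refine ⟨?_, ?_⟩
  · rw [← hpull, ← integrableOn_Ioo_zero_one_iff_integrable_comp_sigmoid g,
      ← intervalIntegrable_iff_integrableOn_Ioo_of_le zero_le_one]
    exact betaIntegral_convergent ha hb
  · rw [← hpull, ← setIntegral_Ioo_zero_one_eq_integral_comp_sigmoid g,
      ← integral_Ioc_eq_integral_Ioo, ← intervalIntegral.integral_of_le zero_le_one]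
    rfl

lemma exp_mul_div_cosh_sq (c : ℂ) (u : ℝ) :
    cexp (c * u) / (Real.cosh u : ℂ) ^ 2 =
      4 * (cexp ((c + 2) / 2 * ↑(2 * u)) / (1 + (Real.exp (2 * u) : ℂ)) ^ 2) := by
  have hE : cexp u ≠ 0 := Complex.exp_ne_zero _
  have hcosh : (Real.cosh u : ℂ) ≠ 0 := ofReal_ne_zero.2 (Real.cosh_pos u).ne'
  have h1 : 1 + (Real.exp (2 * u) : ℂ) ≠ 0 := by
    rw [← ofReal_one, ← ofReal_add]; exact ofReal_ne_zero.2 (by positivity)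
  have hsplit : cexp ((c + 2) / 2 * ↑(2 * u)) = cexp (c * u) * cexp u ^ 2 := by
    rw [← Complex.exp_nat_mul, ← Complex.exp_add]; push_cast; ring_nf
  have hexp2 : (Real.exp (2 * u) : ℂ) = cexp u ^ 2 := by
    rw [ofReal_exp, ← Complex.exp_nat_mul]; push_cast; ring_nf
  rw [hsplit, hexp2, ofReal_cosh, Complex.cosh, Complex.exp_neg]
  field_simp
  ring

/-- For every `λ ∈ ℂ` with `|Re λ| < 2` the integral
`∫_{−∞}^{∞} e^{−λu}/cosh²(u) du` converges and equals `2·Γ((2+λ)/2)·Γ((2−λ)/2)`. -/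
theorem integral_exp_div_cosh_sq (lam : ℂ) (hlam : |lam.re| < 2) :
    Integrable (fun u : ℝ => Complex.exp (-lam * u) / (Real.cosh u : ℂ) ^ 2) ∧
      ∫ u : ℝ, Complex.exp (-lam * u) / (Real.cosh u : ℂ) ^ 2
        = 2 * Complex.Gamma ((2 + lam) / 2) * Complex.Gamma ((2 - lam) / 2) := by
  obtain ⟨hlo, hhi⟩ := abs_lt.1 hlam
  set a : ℂ := (2 - lam) / 2
  set b : ℂ := (2 + lam) / 2
  have ha : 0 < a.re := by simp [a]; linarith
  have hb : 0 < b.re := by simp [b]; linarith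
  have hab : a + b = 2 := by ring
  set F : ℝ → ℂ := fun t => cexp (a * t) / (1 + (Real.exp t : ℂ)) ^ 2
  obtain ⟨hint, hval⟩ := integrable_and_integral_exp_mul_div_one_add_exp_cpow ha hb
  simp only [hab, cpow_two] at hint hval
  have hfun : (fun u : ℝ => Complex.exp (-lam * u) / (Real.cosh u : ℂ) ^ 2) =
      fun u => 4 * F (2 * u) := by
    ext u
    rw [exp_mul_div_cosh_sq, show (-lam + 2) / 2 = a by ring]
  have hΓ : Complex.Gamma a * Complex.Gamma b = betaIntegral a b := by
    rw [Gamma_mul_Gamma_eq_betaIntegral ha hb, hab,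
      show Complex.Gamma 2 = 1 by simp, one_mul]
  rw [hfun]
  refine ⟨(hint.comp_mul_left' two_ne_zero).const_mul 4, ?_⟩
  rw [integral_const_mul, Measure.integral_comp_mul_left F, hval, ← hΓ]
  norm_num
  ring

end
end
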